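/- Let E be a directed graph and let H ⊆ E⁰ be a nonempty saturated hereditary subset such that every saturated hereditary subset K of E⁰ satisfies K ⊆ H or K = E⁰. Suppose E contains a cycle all of whose vertices lie in E⁰ ∖ H. Then there exist a cycle γ in E all of whose vertices lie in E⁰ ∖ H and an edge f ∈ E¹ with s(f) = s(γ) (the base point of γ) and r(f) ∈ H; moreover, for every vertex x ∈ E⁰ one has x ≥ s(γ) if and only if x ∉ H. -/

import Mathlib

/-- In a directed graph with edge set `E`, vertex set `V`, and source and range
maps `s r : E → V`, the vertex `v` reaches the vertex `w` (written `v ≥ w`) if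
there is a directed path (possibly of length zero) from `v` to `w`. -/
def Reaches {V E : Type*} (s r : E → V) : V → V → Prop :=
  Relation.ReflTransGen (fun v w => ∃ e : E, s e = v ∧ r e = w)

/-- A set `H` of vertices is hereditary if `v ∈ H` and `v ≥ w` imply `w ∈ H`. -/
def Hereditary {V E : Type*} (s r : E → V) (H : Set V) : Prop :=
  ∀ ⦃v w : V⦄, v ∈ H → Reaches s r v w → w ∈ H

/-- A vertex `v` is regular if `0 < |s⁻¹(v)| < ∞`. -/
def RegularVertex {V E : Type*} (s : E → V) (v : V) : Prop :=
  {e : E | s e = v}.Nonempty ∧ {e : E | s e = v}.Finite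

/-- A set `H` of vertices is saturated if every regular vertex all of whose
outgoing edges end in `H` belongs to `H`. -/
def Saturated {V E : Type*} (s r : E → V) (H : Set V) : Prop :=
  ∀ v : V, RegularVertex s v → (∀ e : E, s e = v → r e ∈ H) → v ∈ H

/-! Every vertex outside `H` reaches `H`: otherwise the vertices that do not reach `H` would
form a nonempty saturated hereditary set disjoint from `H`. Likewise every vertex outside `H`
reaches the base point `v₀` of the given cycle. Following a path from `v₀` into `H`, the last
vertex `v` before entering `H` lies outside `H` and hence reaches `v₀`, so `v` lies on a cycle
`v ⇝ v₀ → ⋯ ⇝ v`; the vertices of that cycle reach `v` and hence avoid `H`. -/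

section

variable {V E : Type*} {s r : E → V}

theorem Reaches.of_edge (e : E) : Reaches s r (s e) (r e) :=
  .single ⟨e, rfl, rfl⟩

theorem Reaches.exists_edge_into {H : Set V} {a b : V} (hab : Reaches s r a b)
    (ha : a ∉ H) (hb : b ∈ H) :
    ∃ f : E, s f ∉ H ∧ r f ∈ H ∧ Reaches s r a (s f) := by
  induction hab using Relation.ReflTransGen.head_induction_on with
  | refl => exact absurd hb ha
  | @head a c hac _ ih =>
    obtain ⟨e, rfl, rfl⟩ := hac
    by_cases hc : r e ∈ H
    · exact ⟨e, ha, hc, .refl⟩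
    · obtain ⟨f, hf, hrf, hcf⟩ := ih hc
      exact ⟨f, hf, hrf, (Reaches.of_edge e).trans hcf⟩

theorem hereditary_setOf_not_reaches (T : Set V) :
    Hereditary s r {x | ¬∃ t ∈ T, Reaches s r x t} :=
  fun _ _ hv hvw ⟨t, ht, hwt⟩ => hv ⟨t, ht, hvw.trans hwt⟩

theorem saturated_setOf_not_reaches {T : Set V}
    (hT : ∀ t ∈ T, RegularVertex s t →
      ∃ e, s e = t ∧ ∃ t' ∈ T, Reaches s r (r e) t') :
    Saturated s r {x | ¬∃ t ∈ T, Reaches s r x t} := by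
  rintro v hv hK ⟨t, ht, hvt⟩
  rcases hvt.cases_head with rfl | ⟨w, ⟨e, hev, rfl⟩, hwt⟩
  · obtain ⟨e, hev, hreach⟩ := hT v ht hv
    exact hK e hev hreach
  · exact hK e hev ⟨t, ht, hwt⟩

theorem exists_reaches_of_notMem {H T : Set V}
    (hmax : ∀ K : Set V, Hereditary s r K → Saturated s r K → K ⊆ H ∨ K = Set.univ)
    (hTne : T.Nonempty)
    (hT : ∀ t ∈ T, RegularVertex s t →
      ∃ e, s e = t ∧ ∃ t' ∈ T, Reaches s r (r e) t')
    {x : V} (hx : x ∉ H) : ∃ t ∈ T, Reaches s r x t := by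
  rcases hmax _ (hereditary_setOf_not_reaches T) (saturated_setOf_not_reaches hT) with hK | hK
  · by_contra h
    exact hx (hK h)
  · obtain ⟨t, ht⟩ := hTne
    exact absurd ⟨t, ht, .refl⟩ (Set.eq_univ_iff_forall.mp hK t)

theorem exists_walk_of_transGen {a b : V}
    (h : Relation.TransGen (fun v w => ∃ e : E, s e = v ∧ r e = w) a b) :
    ∃ (m : ℕ) (γ : Fin (m + 1) → E), (∀ i : Fin m, r (γ i.castSucc) = s (γ i.succ)) ∧
      s (γ 0) = a ∧ r (γ (Fin.last m)) = b := by
  induction h using Relation.TransGen.head_induction_on with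
  | single hab =>
    obtain ⟨e, rfl, rfl⟩ := hab
    exact ⟨0, fun _ => e, Fin.elim0, rfl, rfl⟩
  | head hac _ ih =>
    obtain ⟨e, rfl, rfl⟩ := hac
    obtain ⟨m, γ, hchain, hstart, hend⟩ := ih
    refine ⟨m + 1, Fin.cons e γ, fun i => ?_, rfl, by simpa [← Fin.succ_last]⟩
    cases i using Fin.cases <;> simp [hstart, hchain]

def IsCycle (s r : E → V) {m : ℕ} (γ : Fin (m + 1) → E) : Prop :=
  ∀ i, r (γ i) = s (γ (i + 1))

theorem exists_cycle_of_transGen {a : V}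
    (h : Relation.TransGen (fun v w => ∃ e : E, s e = v ∧ r e = w) a a) :
    ∃ (m : ℕ) (γ : Fin (m + 1) → E), IsCycle s r γ ∧ s (γ 0) = a := by
  obtain ⟨m, γ, hchain, hstart, hend⟩ := exists_walk_of_transGen h
  refine ⟨m, γ, fun i => ?_, hstart⟩
  cases i using Fin.lastCases with
  | last => rw [Fin.last_add_one, hend, hstart]
  | cast i => rw [Fin.coeSucc_eq_succ, hchain]

theorem IsCycle.reaches_base {m : ℕ} {γ : Fin (m + 1) → E} (hγ : IsCycle s r γ)
    (i : Fin (m + 1)) :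
    Reaches s r (s (γ i)) (s (γ 0)) := by
  induction i using Fin.reverseInduction with
  | last =>
    have hlast := hγ (Fin.last m)
    rw [Fin.last_add_one] at hlast
    exact hlast ▸ Reaches.of_edge _
  | cast i ih => exact (Reaches.of_edge _).trans (by rwa [hγ, Fin.coeSucc_eq_succ])

end

/-- Let `H` be a nonempty saturated hereditary set of vertices such that every
saturated hereditary set `K` satisfies `K ⊆ H` or `K = E⁰`.  If the graph
contains a cycle (given by edges `α i`, `i : Fin (n+1)`, with
`r (α i) = s (α (i+1))` cyclically) all of whose vertices lie outside `H`, then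
there exist a cycle `γ` with all vertices outside `H` and an edge `f` with
`s f = s (γ 0)` (the base point of `γ`) and `r f ∈ H`; moreover a vertex `x`
reaches `s (γ 0)` if and only if `x ∉ H`. -/
theorem exists_cycle_with_edge_into {V E : Type*} (s r : E → V) (H : Set V)
    (hH : Hereditary s r H ∧ Saturated s r H) (hne : H.Nonempty)
    (hmax : ∀ K : Set V, Hereditary s r K → Saturated s r K →
      K ⊆ H ∨ K = Set.univ)
    (n : ℕ) (α : Fin (n + 1) → E)
    (hchain : ∀ i : Fin (n + 1), r (α i) = s (α (i + 1)))
    (hout : ∀ i : Fin (n + 1), s (α i) ∉ H) :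
    ∃ (m : ℕ) (γ : Fin (m + 1) → E) (f : E),
      (∀ i : Fin (m + 1), r (γ i) = s (γ (i + 1))) ∧
      (∀ i : Fin (m + 1), s (γ i) ∉ H) ∧
      s f = s (γ 0) ∧ r f ∈ H ∧
      (∀ x : V, Reaches s r x (s (γ 0)) ↔ x ∉ H) := by
  have hα : IsCycle s r α := hchain
  have reaches_H : ∀ x ∉ H, ∃ t ∈ H, Reaches s r x t :=
    fun x => exists_reaches_of_notMem hmax hne fun t ht ⟨⟨e, he⟩, _⟩ =>
      ⟨e, he, r e, hH.1 ht (he ▸ Reaches.of_edge e), .refl⟩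
  have reaches_base : ∀ x ∉ H, Reaches s r x (s (α 0)) := by
    intro x hx
    obtain ⟨t, rfl, hxt⟩ := exists_reaches_of_notMem hmax (Set.singleton_nonempty _)
      (fun t ht _ => ⟨α 0, ht.symm, s (α 0), rfl, hchain 0 ▸ hα.reaches_base (0 + 1)⟩) hx
    exact hxt
  obtain ⟨t, htH, hα₀t⟩ := reaches_H _ (hout 0)
  obtain ⟨f, hfH, hrf, hα₀f⟩ := hα₀t.exists_edge_into (hout 0) htH
  have hf_closed : Relation.TransGen (fun v w => ∃ e : E, s e = v ∧ r e = w) (s f) (s f) :=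
    .trans_right (reaches_base _ hfH) <| .head' ⟨α 0, rfl, rfl⟩ <|
      (reaches_base _ (hchain 0 ▸ hout (0 + 1))).trans hα₀f
  obtain ⟨m, γ, hγ, hγ₀⟩ := exists_cycle_of_transGen hf_closed
  have notMem_of_reaches : ∀ x, Reaches s r x (s f) → x ∉ H :=
    fun x hx hxH => hfH (hH.1 hxH hx)
  refine ⟨m, γ, f, hγ, fun i => ?_, hγ₀.symm, hrf, fun x => ?_⟩
  · exact notMem_of_reaches _ (hγ₀ ▸ hγ.reaches_base i)
  · rw [hγ₀]
    exact ⟨notMem_of_reaches x, fun hx => (reaches_base x hx).trans hα₀f⟩
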